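/- arXiv:2103.07282 — 6 statements merged into one kernel-verified Lean document; each statement's English description precedes it below -/
import Mathlib

section
/- Let H be a finite subset of S with Q̄ ⊆ H. Suppose f ∈ S_1 and f ≡_i 0 (mod H) for some i > 0 (i.e., f ∈ V_{H,i}). Let g = Σ_r c_r x^r ∈ k[x]. Then there exists f' ∈ S_1 such that L(g)∘f − f' lies in the ideal ⟨Q̄⟩ generated by Q̄, and f' ≡_r 0 (mod H) where r = max(i, q). Here L(g)∘f denotes Σ_r c_r f^{q^r}. -/
open MvPolynomial

noncomputable section

def Vspace {σ K : Type*} [Field K] (G : Set (MvPolynomial σ K)) (i : ℕ) :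
    Submodule K (MvPolynomial σ K) :=
  sInf {W : Submodule K (MvPolynomial σ K) |
    (∀ f ∈ W, MvPolynomial.totalDegree f ≤ i) ∧
    (∀ g ∈ G, MvPolynomial.totalDegree g ≤ i → g ∈ W) ∧
    ∀ g ∈ W, ∀ h : MvPolynomial σ K,
      MvPolynomial.totalDegree (h * g) ≤ i → h * g ∈ W}

def lastFallDegree {σ K : Type*} [Field K] (G : Set (MvPolynomial σ K)) : ℕ :=
  sSup {d : ℕ | 0 < d ∧
    Vspace G d ⊓ MvPolynomial.restrictTotalDegree σ K (d - 1) ≠ Vspace G (d - 1)}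

/-- `ℓ(h(x_i))` : the linear form `∑_j h_j x_{ij}` in `S = k[x_{ij}]`,
for a univariate polynomial `h` of degree `< n'`. -/
def ellAt {k : Type*} [Field k] (m n' : ℕ) (i : Fin m) (h : Polynomial k) :
    MvPolynomial (Fin m × Fin n') k :=
  ∑ j : Fin n', C (h.coeff (j : ℕ)) * X (i, j)

/-- `ℓ(f)` for `f = ∑_i f_i(x_i)` with `deg f_i < n'`. -/
def ellSum {k : Type*} [Field k] (m n' : ℕ) (φ : Fin m → Polynomial k) :
    MvPolynomial (Fin m × Fin n') k :=
  ∑ i : Fin m, ellAt m n' i (φ i)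

/-- `Q̄_r` : the set of relations `x_{ij}^q - x_{i,j+1}` (for `j < n'-1`) and
`x_{i,n'-1}^q - ℓ(g_W(x_i))`, restricted to indices `i ≥ r`. -/
def QbarFrom {k : Type*} [Field k] (m n' q r : ℕ) (gW : Polynomial k) :
    Set (MvPolynomial (Fin m × Fin n') k) :=
  {P | ∃ (i : Fin m) (j : Fin n') (hj : (j : ℕ) + 1 < n'), r ≤ (i : ℕ) ∧
        P = X (i, j) ^ q - X (i, ⟨(j : ℕ) + 1, hj⟩)} ∪
  {P | ∃ (i : Fin m) (j : Fin n'), r ≤ (i : ℕ) ∧ (j : ℕ) + 1 = n' ∧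
        P = X (i, j) ^ q - ellAt m n' i gW}

/-- `S_{1r}` : the space of `k`-linear forms in the variables `x_{ij}` with `i ≥ r`. -/
def S1r {k : Type*} [Field k] (m n' : ℕ) (r : ℕ) :
    Submodule k (MvPolynomial (Fin m × Fin n') k) :=
  Submodule.span k {P | ∃ p : Fin m × Fin n', r ≤ (p.1 : ℕ) ∧ P = X p}

/-- `L(h)` for `h = ∑_i h_i(x_i)` with `deg h_i < n` : the `k'`-linearized polynomial
`∑_i ∑_j h_{ij} x_i^{q^j}`. -/
def Lmap {k : Type*} [Field k] (m n q : ℕ) (h : Fin m → Polynomial k) :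
    MvPolynomial (Fin m) k :=
  ∑ i : Fin m, ∑ j : Fin n, C ((h i).coeff (j : ℕ)) * X i ^ q ^ (j : ℕ)

/-- `F` is reducible for `W` (where `W` corresponds to `f_W`): for each `i < m-1`,
either `V_{Ḡ,q} ∩ S_{1i} = V_{Ḡ,q} ∩ S_{1,i+1}`, or some `k'`-linearized `L(f_i)`,
`f_i = ∑_{j≥i} g_{ij}` with `deg g_{ij} < n'`, has `ℓ(f_i) ∈ V_{Ḡ,q} ∩ S_{1i}` and
`gcd(g_{ii}, f_W) = 1`. -/
def ReducibleFor {k' k : Type*} [Field k'] [Field k] [Algebra k' k]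
    (q m n' : ℕ) (fW : Polynomial k')
    (Gbar : Set (MvPolynomial (Fin m × Fin n') k)) : Prop :=
  ∀ i : Fin m, (i : ℕ) + 1 < m →
    (Vspace Gbar q ⊓ S1r m n' (i : ℕ) = Vspace Gbar q ⊓ S1r m n' ((i : ℕ) + 1)) ∨
    ∃ φ : Fin m → Polynomial k,
      (∀ j, (φ j).natDegree < n') ∧
      (∀ j : Fin m, (j : ℕ) < (i : ℕ) → φ j = 0) ∧
      ellSum m n' φ ∈ Vspace Gbar q ⊓ S1r m n' (i : ℕ) ∧
      IsCoprime (φ i) (fW.map (algebraMap k' k))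

/-!
Over a field of characteristic `p` with `q = p ^ e`, raising to the `q`-th power is additive and
`q`-semilinear, so for a linear form `f = ∑ c_{ij} x_{ij}` we get `f ^ q = ∑ c_{ij} ^ q x_{ij} ^ q`.
Modulo `Q̄` each `x_{ij} ^ q` is a linear form (`x_{i,j+1}`, or `ℓ(g_W(x_i))` when `j = n' - 1`),
and the relation used has degree `q` and lies in `H`. Hence `f ^ q` is congruent modulo `⟨Q̄⟩` to a
linear form `f₁`, and `f₁ = f ^ q - (f ^ q - f₁)` stays in `V_{H,r}` for `r = max(i, q)`.
Iterating handles `f ^ (q ^ s)`, and `L(g)∘f` is a `k`-linear combination of these.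
-/

theorem exists_pow_expChar_pow_sub_mem_of_mem_span {K A : Type*} [CommRing K] [CommRing A]
    [Algebra K A] (p : ℕ) [ExpChar A p] (e : ℕ) {s : Set A} {M N : Submodule K A}
    (hs : ∀ x ∈ s, ∃ y ∈ M, x ^ p ^ e - y ∈ N) {f : A} (hf : f ∈ Submodule.span K s) :
    ∃ y ∈ M, f ^ p ^ e - y ∈ N := by
  induction hf using Submodule.span_induction with
  | mem x hx => exact hs x hx
  | zero => exact ⟨0, M.zero_mem, by simp [zero_pow (pow_ne_zero e (expChar_pos A p).ne')]⟩
  | add a b _ _ ha hb =>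
    obtain ⟨ya, hya, ha⟩ := ha
    obtain ⟨yb, hyb, hb⟩ := hb
    refine ⟨ya + yb, M.add_mem hya hyb, ?_⟩
    rw [add_pow_expChar_pow, add_sub_add_comm]
    exact N.add_mem ha hb
  | smul c a _ ha =>
    obtain ⟨ya, hya, ha⟩ := ha
    refine ⟨c ^ p ^ e • ya, M.smul_mem _ hya, ?_⟩
    rw [smul_pow, ← smul_sub]
    exact N.smul_mem _ ha

section Vspace

variable {σ K : Type*} [Field K] {G : Set (MvPolynomial σ K)} {i j : ℕ}

theorem mem_Vspace_of_mem {g : MvPolynomial σ K} (hg : g ∈ G) (hd : g.totalDegree ≤ i) :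
    g ∈ Vspace G i :=
  Submodule.mem_sInf.2 fun _ hW => hW.2.1 g hg hd

theorem mul_mem_Vspace {g : MvPolynomial σ K} (hg : g ∈ Vspace G i) (h : MvPolynomial σ K)
    (hd : (h * g).totalDegree ≤ i) : h * g ∈ Vspace G i :=
  Submodule.mem_sInf.2 fun W hW => hW.2.2 g (Submodule.mem_sInf.1 hg W hW) h hd

theorem pow_mem_Vspace {f : MvPolynomial σ K} (hf : f ∈ Vspace G i) {n : ℕ} (hn : n ≠ 0)
    (hd : (f ^ n).totalDegree ≤ i) : f ^ n ∈ Vspace G i := by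
  rw [← pow_sub_one_mul hn] at hd ⊢
  exact mul_mem_Vspace hf _ hd

theorem Vspace_mono (hij : i ≤ j) : Vspace G i ≤ Vspace G j := by
  have h : Vspace G i ≤ Vspace G j ⊓ restrictTotalDegree σ K i :=
    sInf_le ⟨fun f hf => (mem_restrictTotalDegree σ i f).1 hf.2,
      fun g hg hd =>
        ⟨mem_Vspace_of_mem hg (hd.trans hij), (mem_restrictTotalDegree σ i g).2 hd⟩,
      fun g hg h hd =>
        ⟨mul_mem_Vspace hg.1 h (hd.trans hij), (mem_restrictTotalDegree σ i _).2 hd⟩⟩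
  exact h.trans inf_le_left

end Vspace

section Qbar

variable {k : Type*} [Field k] {m n' : ℕ} {gW : Polynomial k}

/-- The linear form to which `Q̄` reduces `X p ^ q`. -/
def frobeniusReduct (m n' : ℕ) (gW : Polynomial k) (p : Fin m × Fin n') :
    MvPolynomial (Fin m × Fin n') k :=
  if h : (p.2 : ℕ) + 1 < n' then X (p.1, ⟨(p.2 : ℕ) + 1, h⟩) else ellAt m n' p.1 gW

theorem X_pow_sub_frobeniusReduct_mem_QbarFrom (q : ℕ) (p : Fin m × Fin n') :
    X p ^ q - frobeniusReduct m n' gW p ∈ QbarFrom m n' q 0 gW := by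
  unfold frobeniusReduct
  split_ifs with h
  · exact Or.inl ⟨p.1, p.2, h, Nat.zero_le _, rfl⟩
  · exact Or.inr ⟨p.1, p.2, Nat.zero_le _, by omega, rfl⟩

theorem X_mem_S1r (p : Fin m × Fin n') :
    (X p : MvPolynomial (Fin m × Fin n') k) ∈ S1r m n' 0 :=
  Submodule.subset_span ⟨p, Nat.zero_le _, rfl⟩

theorem ellAt_mem_S1r (i : Fin m) (h : Polynomial k) : ellAt m n' i h ∈ S1r m n' 0 :=
  Submodule.sum_mem _ fun j _ => by
    rw [← smul_eq_C_mul]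
    exact Submodule.smul_mem _ _ (X_mem_S1r _)

theorem frobeniusReduct_mem_S1r (p : Fin m × Fin n') :
    frobeniusReduct m n' gW p ∈ S1r m n' 0 := by
  unfold frobeniusReduct
  split_ifs
  · exact X_mem_S1r _
  · exact ellAt_mem_S1r _ _

theorem totalDegree_le_one_of_mem_S1r {f : MvPolynomial (Fin m × Fin n') k}
    (hf : f ∈ S1r m n' 0) : f.totalDegree ≤ 1 := by
  have : S1r (k := k) m n' 0 ≤ restrictTotalDegree _ k 1 :=
    Submodule.span_le.2 fun _ ⟨p, _, hP⟩ =>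
      (mem_restrictTotalDegree _ 1 _).2 (hP ▸ (totalDegree_X p).le)
  exact (mem_restrictTotalDegree _ 1 f).1 (this hf)

variable {p e r : ℕ} [ExpChar k p] {H : Set (MvPolynomial (Fin m × Fin n') k)}

theorem exists_pow_sub_mem_span_QbarFrom_inf_Vspace (hQH : QbarFrom m n' (p ^ e) 0 gW ⊆ H)
    (hr : p ^ e ≤ r) {f : MvPolynomial (Fin m × Fin n') k} (hf : f ∈ S1r m n' 0) :
    ∃ f₁ ∈ S1r m n' 0, f ^ p ^ e - f₁ ∈
      (Ideal.span (QbarFrom m n' (p ^ e) 0 gW)).restrictScalars k ⊓ Vspace H r := by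
  refine exists_pow_expChar_pow_sub_mem_of_mem_span p e ?_ hf
  rintro _ ⟨x, -, rfl⟩
  have hrel := X_pow_sub_frobeniusReduct_mem_QbarFrom (gW := gW) (p ^ e) x
  refine ⟨_, frobeniusReduct_mem_S1r x, Ideal.subset_span hrel, mem_Vspace_of_mem (hQH hrel) ?_⟩
  have hpe : 1 ≤ p ^ e := Nat.one_le_pow _ _ (expChar_pos k p)
  calc _ ≤ max (X x ^ p ^ e : MvPolynomial (Fin m × Fin n') k).totalDegree
        (frobeniusReduct m n' gW x).totalDegree := totalDegree_sub _ _
    _ ≤ r := by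
      rw [totalDegree_X_pow]
      have := totalDegree_le_one_of_mem_S1r (frobeniusReduct_mem_S1r (gW := gW) x)
      omega

theorem exists_pow_sub_mem_span_QbarFrom_of_mem_Vspace (hQH : QbarFrom m n' (p ^ e) 0 gW ⊆ H)
    (hr : p ^ e ≤ r) {f : MvPolynomial (Fin m × Fin n') k} (hf : f ∈ S1r m n' 0)
    (hfH : f ∈ Vspace H r) :
    ∃ f₁ ∈ S1r m n' 0, f ^ p ^ e - f₁ ∈ Ideal.span (QbarFrom m n' (p ^ e) 0 gW) ∧
      f₁ ∈ Vspace H r := by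
  obtain ⟨f₁, hf₁, hQ, hV⟩ := exists_pow_sub_mem_span_QbarFrom_inf_Vspace hQH hr hf
  have hfq : f ^ p ^ e ∈ Vspace H r :=
    pow_mem_Vspace hfH (pow_ne_zero e (expChar_pos k p).ne') <|
      (totalDegree_pow f _).trans <| by
        nlinarith [totalDegree_le_one_of_mem_S1r hf]
  refine ⟨f₁, hf₁, hQ, ?_⟩
  simpa using (Vspace H r).sub_mem hfq hV

theorem exists_pow_pow_sub_mem_span_QbarFrom (hQH : QbarFrom m n' (p ^ e) 0 gW ⊆ H)
    (hr : p ^ e ≤ r) {f : MvPolynomial (Fin m × Fin n') k} (hf : f ∈ S1r m n' 0)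
    (hfH : f ∈ Vspace H r) (s : ℕ) :
    ∃ fs ∈ S1r m n' 0, f ^ (p ^ e) ^ s - fs ∈ Ideal.span (QbarFrom m n' (p ^ e) 0 gW) ∧
      fs ∈ Vspace H r := by
  induction s with
  | zero => exact ⟨f, hf, by simp, hfH⟩
  | succ s ih =>
    obtain ⟨fs, hfs, hQ, hV⟩ := ih
    obtain ⟨f₁, hf₁, hQ₁, hV₁⟩ := exists_pow_sub_mem_span_QbarFrom_of_mem_Vspace hQH hr hfs hV
    refine ⟨f₁, hf₁, ?_, hV₁⟩
    have hfrob : f ^ (p ^ e) ^ (s + 1) - f₁ =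
        (f ^ (p ^ e) ^ s - fs) ^ p ^ e + (fs ^ p ^ e - f₁) := by
      rw [sub_pow_expChar_pow, pow_succ, pow_mul f, sub_add_sub_cancel]
    rw [hfrob]
    exact Ideal.add_mem _ (Ideal.pow_mem_of_mem _ hQ _ (pow_pos (expChar_pos k p) e)) hQ₁

end Qbar

theorem linearized_of_linear_form_mod_Qbar_general
    {k' k : Type} [Field k'] [Fintype k'] [Field k] [Algebra k' k]
    (q m : ℕ) (hq : q = Fintype.card k')
    (n' : ℕ)
    (gW : Polynomial k')
    (H : Set (MvPolynomial (Fin m × Fin n') k))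
    (hQH : QbarFrom m n' q 0 (gW.map (algebraMap k' k)) ⊆ H)
    (f : MvPolynomial (Fin m × Fin n') k) (hf : f ∈ S1r m n' 0)
    (i : ℕ) (hfH : f ∈ Vspace H i)
    (g : Polynomial k) :
    ∃ f' ∈ S1r m n' 0,
      (∑ r ∈ g.support, MvPolynomial.C (g.coeff r) * f ^ q ^ r) - f'
          ∈ Ideal.span (QbarFrom m n' q 0 (gW.map (algebraMap k' k))) ∧
      f' ∈ Vspace H (max i q) := by
  obtain ⟨e, hp, hcard⟩ := FiniteField.card k' (ringChar k')
  have : Fact (ringChar k').Prime := ⟨hp⟩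
  have := expChar_of_injective_algebraMap (algebraMap k' k).injective (ringChar k')
  obtain rfl : q = ringChar k' ^ (e : ℕ) := hq.trans hcard
  choose F hF hFQ hFV using fun s =>
    exists_pow_pow_sub_mem_span_QbarFrom hQH (le_max_right i _) hf
      (Vspace_mono (le_max_left i _) hfH) s
  refine ⟨∑ r ∈ g.support, g.coeff r • F r,
    Submodule.sum_mem _ fun r _ => Submodule.smul_mem _ _ (hF r), ?_,
    Submodule.sum_mem _ fun r _ => Submodule.smul_mem _ _ (hFV r)⟩
  rw [← Finset.sum_sub_distrib]
  refine Submodule.sum_mem _ fun r _ => ?_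
  rw [smul_eq_C_mul, ← mul_sub]
  exact Ideal.mul_mem_left _ _ (hFQ r)

/-- **Lemma 2.2.** Let `H ⊆ S` be finite with `Q̄ ⊆ H`.  If `f ∈ S₁` and `f ≡_i 0 (mod H)`
for some `i > 0`, then for any `g = ∑_r c_r x^r ∈ k[x]` there is `f' ∈ S₁` with
`L(g)∘f - f' ∈ ⟨Q̄⟩` and `f' ≡_{max(i,q)} 0 (mod H)`, where `L(g)∘f = ∑_r c_r f^{q^r}`. -/
theorem linearized_of_linear_form_mod_Qbar
    {k' k : Type} [Field k'] [Fintype k'] [Field k] [Algebra k' k]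
    (q n m : ℕ) (hq : q = Fintype.card k') (hn : 0 < n)
    (α : Module.Basis (Fin n) k' k)
    (fW : Polynomial k') (hmonic : fW.Monic) (hdvd : fW ∣ Polynomial.X ^ n - 1)
    (n' : ℕ) (hn' : n' = fW.natDegree) (hn'pos : 0 < n')
    (gW : Polynomial k') (hgW : gW = Polynomial.X ^ n' - fW)
    (H : Set (MvPolynomial (Fin m × Fin n') k)) (hHfin : H.Finite)
    (hQH : QbarFrom m n' q 0 (gW.map (algebraMap k' k)) ⊆ H)
    (f : MvPolynomial (Fin m × Fin n') k) (hf : f ∈ S1r m n' 0)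
    (i : ℕ) (hi : 0 < i) (hfH : f ∈ Vspace H i)
    (g : Polynomial k) :
    ∃ f' ∈ S1r m n' 0,
      (∑ r ∈ g.support, MvPolynomial.C (g.coeff r) * f ^ q ^ r) - f'
          ∈ Ideal.span (QbarFrom m n' q 0 (gW.map (algebraMap k' k))) ∧
      f' ∈ Vspace H (max i q) :=
  linearized_of_linear_form_mod_Qbar_general q m hq n' gW H hQH f hf i hfH g
end
end

section
/- Let F ⊆ k[X_0,…,X_{m−1}] be finite, k = F_{q^n}, and let k̄ be an algebraic closure of k. The map sending (a_0,…,a_{m−1}) to the point with X_i-coordinate a_i and Y_{ij}-coordinate a_i^{q^j} (for 1 ≤ j ≤ n−1) is a bijection from Z_k(F), the set of solutions of F with all coordinates in k, onto Z(F_1), the set of solutions of F_1 over k̄. -/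
open MvPolynomial

/-!
The equations `X_i^q = Y_{i1}, …, Y_{i,n-1}^q = X_i` say that the coordinates of a solution
attached to `X_i` form a Frobenius orbit: `Y_{ij} = X_i^{q^j}` and `X_i^{q^n} = X_i`. The roots of
`X^{q^n} - X` in any extension of `k = 𝔽_{q^n}` are exactly the elements of `k`, since `k` already
supplies `q^n` of them. So a solution of `F₁` is determined by its `X`-coordinates, which form a
solution of `F` in `k`, and every such solution arises this way.
-/

theorem FiniteField.splits_X_pow_card_sub_X_self (k : Type*) [Field k] [Fintype k] :
    (Polynomial.X ^ Fintype.card k - Polynomial.X : Polynomial k).Splits := by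
  rw [Polynomial.splits_iff_card_roots, FiniteField.roots_X_pow_card_sub_X,
    FiniteField.X_pow_card_sub_X_natDegree_eq k Fintype.one_lt_card]
  rfl

theorem FiniteField.mem_range_algebraMap_of_pow_card_eq_self {k K : Type*} [Field k] [Fintype k]
    [CommRing K] [IsDomain K] [Algebra k K] {x : K} (hx : x ^ Fintype.card k = x) :
    x ∈ Set.range (algebraMap k K) :=
  (splits_X_pow_card_sub_X_self k).mem_range_of_isRoot
    (X_pow_card_sub_X_ne_zero k Fintype.one_lt_card) (by simp [hx])

theorem Fin.pow_pow_val_add_one {M : Type*} [Monoid M] {n q : ℕ} {a : M}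
    (ha : a ^ q ^ (n + 1) = a) (j : Fin (n + 1)) :
    (a ^ q ^ (j : ℕ)) ^ q = a ^ q ^ ((j + 1 : Fin (n + 1)) : ℕ) := by
  rw [← pow_mul, ← pow_succ]
  rcases Fin.eq_castSucc_or_eq_last j with ⟨j, rfl⟩ | rfl
  · rw [Fin.val_add_one_of_lt (Fin.castSucc_lt_last j)]
  · simpa using ha

theorem Fin.forall_pow_eq_apply_add_one_iff {M : Type*} [Monoid M] {n q : ℕ}
    {x : Fin (n + 1) → M} :
    (∀ j, x j ^ q = x (j + 1)) ↔
      x 0 ^ q ^ (n + 1) = x 0 ∧ x = fun j : Fin (n + 1) => x 0 ^ q ^ (j : ℕ) := by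
  refine ⟨fun hx => ?_, fun ⟨h0, hx⟩ j => ?_⟩
  · have hval : ∀ j : Fin (n + 1), x j = x 0 ^ q ^ (j : ℕ) := by
      refine Fin.induction (by simp) fun j ih => ?_
      rw [← Fin.coeSucc_eq_succ, ← hx, ih, ← pow_mul, ← pow_succ, Fin.coeSucc_eq_succ,
        Fin.val_succ, Fin.val_castSucc]
    refine ⟨?_, funext hval⟩
    calc x 0 ^ q ^ (n + 1) = x (Fin.last n) ^ q := by
            rw [hval (Fin.last n), Fin.val_last, ← pow_mul, pow_succ]
      _ = x 0 := by rw [hx, Fin.last_add_one]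
  · rw [hx]
    exact pow_pow_val_add_one h0 j

theorem MvPolynomial.forall_aeval_eq_zero_rename_image_union_range_iff {σ τ R S : Type*}
    [CommRing R] [CommRing S] [Algebra R S] (e : σ → τ) (F : Set (MvPolynomial σ R)) (q : ℕ)
    (s : τ → τ) (x : τ → S) :
    (∀ f ∈ rename e '' F ∪ Set.range (fun p => X p ^ q - X (s p)), aeval x f = 0) ↔
      (∀ f ∈ F, aeval (x ∘ e) f = 0) ∧ ∀ p, x p ^ q = x (s p) := by
  simp [or_imp, forall_and, aeval_rename, sub_eq_zero]

theorem bijOn_solutions_F1_general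
    {k' k K : Type} [Field k'] [Fintype k'] [Field k] [Algebra k' k]
    [Field K] [Algebra k K]
    (q n m : ℕ) (hq : q = Fintype.card k') (hn : 0 < n)
    (α : Module.Basis (Fin n) k' k)
    (F : Finset (MvPolynomial (Fin m) k))
    (F1 : Set (MvPolynomial (Fin m × Fin n) k))
    (hF1 : F1 =
      (MvPolynomial.rename fun i : Fin m => (i, (⟨0, hn⟩ : Fin n))) '' ↑F ∪
      Set.range (fun p : Fin m × Fin n =>
        X p ^ q - X (p.1, p.2 + ⟨1 % n, Nat.mod_lt 1 hn⟩))) :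
    Set.BijOn
      (fun (a : Fin m → k) (p : Fin m × Fin n) =>
        algebraMap k K (a p.1 ^ q ^ (p.2 : ℕ)))
      {a : Fin m → k | ∀ f ∈ F, MvPolynomial.eval a f = 0}
      {x : Fin m × Fin n → K | ∀ f ∈ F1, MvPolynomial.aeval x f = 0} := by
  -- after this, `⟨1 % (n + 1), _⟩` is definitionally `1 : Fin (n + 1)`
  obtain ⟨n, rfl⟩ := Nat.exists_eq_add_one_of_ne_zero hn.ne'
  subst hF1
  have : Fintype k := Module.fintypeOfFintype α
  have hcard : Fintype.card k = q ^ (n + 1) := by rw [Module.card_fintype α, Fintype.card_fin, hq]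
  have hpow (c : k) : c ^ q ^ (n + 1) = c := hcard ▸ FiniteField.pow_card c
  simp only [forall_aeval_eq_zero_rename_image_union_range_iff]
  refine ⟨fun a ha => ⟨fun f hf => ?_, fun ⟨i, j⟩ => ?_⟩, fun a _ b _ hab => ?_, fun x hx => ?_⟩
  · have hx0 : (fun p : Fin m × Fin (n + 1) => algebraMap k K (a p.1 ^ q ^ (p.2 : ℕ))) ∘
        (·, ⟨0, hn⟩) = algebraMap k K ∘ a := by
      funext i; simp
    beta_reduce
    rw [hx0, aeval_algebraMap_eq_zero_iff]
    exact ha f hf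
  · rw [← map_pow]
    exact congrArg _ (Fin.pow_pow_val_add_one (hpow (a i)) j)
  · funext i
    simpa using congrFun hab (i, 0)
  · obtain ⟨hF, hcyc⟩ := hx
    have hxi i := Fin.forall_pow_eq_apply_add_one_iff.1 fun j => hcyc (i, j)
    choose a ha using fun i =>
      FiniteField.mem_range_algebraMap_of_pow_card_eq_self (k := k) (hcard ▸ (hxi i).1)
    have hx0 : x ∘ (·, ⟨0, hn⟩) = algebraMap k K ∘ a := funext fun i => (ha i).symm
    refine ⟨a, fun f hf => ?_, funext fun ⟨i, j⟩ => ?_⟩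
    · have := hF f hf
      rwa [hx0, aeval_algebraMap_eq_zero_iff] at this
    · beta_reduce
      rw [map_pow, ha]
      exact (congrFun (hxi i).2 j).symm

/-- `Z_k(F)` is in bijection with `Z(F₁)`:  the map sending `(a_0,…,a_{m-1})` to the point
with `X_i`-coordinate `a_i` and `Y_{ij}`-coordinate `a_i^{q^j}` is a bijection from the set
of solutions of `F` with coordinates in `k = F_{q^n}` onto the set of solutions of
`F₁ = F ∪ {X_i^q - Y_{i1}, …, Y_{i,n-1}^q - X_i}` over an algebraic closure `K` of `k`.
(The variables are indexed by `Fin m × Fin n`, with `X_i = (i,0)` and `Y_{ij} = (i,j)`.) -/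
theorem bijOn_solutions_F1
    {k' k K : Type} [Field k'] [Fintype k'] [Field k] [Algebra k' k]
    [Field K] [Algebra k K] [IsAlgClosed K]
    (q n m : ℕ) (hq : q = Fintype.card k') (hn : 0 < n)
    (α : Module.Basis (Fin n) k' k)
    (F : Finset (MvPolynomial (Fin m) k))
    (F1 : Set (MvPolynomial (Fin m × Fin n) k))
    (hF1 : F1 =
      (MvPolynomial.rename fun i : Fin m => (i, (⟨0, hn⟩ : Fin n))) '' ↑F ∪
      Set.range (fun p : Fin m × Fin n =>
        X p ^ q - X (p.1, p.2 + ⟨1 % n, Nat.mod_lt 1 hn⟩))) :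
    Set.BijOn
      (fun (a : Fin m → k) (p : Fin m × Fin n) =>
        algebraMap k K (a p.1 ^ q ^ (p.2 : ℕ)))
      {a : Fin m → k | ∀ f ∈ F, MvPolynomial.eval a f = 0}
      {x : Fin m × Fin n → K | ∀ f ∈ F1, MvPolynomial.aeval x f = 0} :=
  bijOn_solutions_F1_general q n m hq hn α F F1 hF1
end

section
/- Let F ⊆ k[X_0,…,X_{m−1}] be finite with Weil descent system F' with respect to a basis α_0,…,α_{n−1} of k over k'. Then: (1) Z_{k'}(F') = Z(F'_1), i.e., the solutions of F' with all coordinates in k' coincide with the solutions of F'_1 over an algebraic closure; and (2) the map sending (a_{ij})_{i,j} to (Σ_{j=0}^{n−1} α_j a_{0j}, …, Σ_{j=0}^{n−1} α_j a_{m−1,j}) is a bijection from Z_{k'}(F') onto Z_k(F). -/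
/-!
Part (1): a point of `K` satisfying the field equations `X^q - X` has every coordinate a root of
`X^q - X`, which already splits over `k'` with the `q` elements of `k'` as its roots; so the point
comes from `k'`, where vanishing of `F'` can be tested after the injective map `k' → K`.

Part (2): evaluating the defining identity `f(∑_j α_j X_{ij}) = ∑_j α_j f_j` at a point
`a ∈ k'^{m×n}` gives `f(x) = ∑_j f_j(a) α_j` for the corresponding `x ∈ k^m`, so by linear
independence of the `α_j`, `f(x) = 0` iff all `f_j(a) = 0`. The zeros of `F'` are thus the
preimage of the zeros of `F` under the coordinate map, which is a bijection `k'^{m×n} ≃ k^m`.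
-/

open MvPolynomial

theorem FiniteField.mem_range_algebraMap_of_pow_card_eq {K L : Type*} [Field K] [Fintype K]
    [Field L] [Algebra K L] {y : L} (hy : y ^ Fintype.card K = y) :
    y ∈ (algebraMap K L).range := by
  have hsplit : (Polynomial.X ^ Fintype.card K - Polynomial.X : Polynomial K).Splits := by
    simpa using (FiniteField.isSplittingField_sub K K).splits
  refine hsplit.mem_range_of_isRoot
    (FiniteField.X_pow_card_sub_X_ne_zero K Fintype.one_lt_card) ?_
  simp [hy]

theorem Module.Basis.bijective_sum_smul_uncurry {R M σ ι : Type*} [Semiring R]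
    [AddCommMonoid M] [Module R M] [Fintype ι] (b : Module.Basis ι R M) :
    Function.Bijective (fun (a : σ × ι → R) (i : σ) => ∑ j, a (i, j) • b j) := by
  let e := (Equiv.curry σ ι R).trans (Equiv.piCongrRight fun _ => b.equivFun.symm.toEquiv)
  have he : ⇑e = fun (a : σ × ι → R) (i : σ) => ∑ j, a (i, j) • b j := by
    ext a i
    simp [e, b.equivFun_symm_apply]
  exact he ▸ e.bijective

namespace MvPolynomial

theorem aeval_algebraMap_comp {R S σ : Type*} [CommSemiring R] [CommSemiring S]
    [Algebra R S] (a : σ → R) (f : MvPolynomial σ R) :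
    aeval (algebraMap R S ∘ a) f = algebraMap R S (eval a f) := by
  rw [aeval_def, eval, coe_eval₂Hom, eval₂_comp_left, RingHom.comp_id]

theorem setOf_aeval_union_fieldEquations_eq_image {K L σ : Type*} [Field K] [Fintype K]
    [Field L] [Algebra K L] (S : Set (MvPolynomial σ K)) :
    {x : σ → L | ∀ f ∈ S ∪ Set.range (fun p => X p ^ Fintype.card K - X p), aeval x f = 0}
      = (fun a => algebraMap K L ∘ a) '' {a | ∀ f ∈ S, eval a f = 0} := by
  ext x
  constructor
  · intro hx
    have hfield : ∀ p, x p ∈ (algebraMap K L).range := fun p =>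
      FiniteField.mem_range_algebraMap_of_pow_card_eq <| by
        simpa [sub_eq_zero] using hx _ (Or.inr ⟨p, rfl⟩)
    choose a ha using hfield
    obtain rfl : x = algebraMap K L ∘ a := _root_.funext fun p => (ha p).symm
    refine ⟨a, fun f hf => (algebraMap K L).injective ?_, rfl⟩
    rw [map_zero, ← aeval_algebraMap_comp]
    exact hx f (Or.inl hf)
  · rintro ⟨a, ha, rfl⟩ f (hf | ⟨p, rfl⟩)
    · rw [aeval_algebraMap_comp, ha f hf, map_zero]
    · rw [map_sub, map_pow, aeval_X]
      exact sub_eq_zero.mpr (by simp [← map_pow, FiniteField.pow_card])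

variable {k' k σ ι : Type*} [CommSemiring k'] [CommSemiring k] [Algebra k' k] [Fintype ι]

/-- `c` is the family of Weil descent components `f_j` of `f` with respect to `α`. -/
def IsWeilDescent (α : ι → k) (f : MvPolynomial σ k) (c : ι → MvPolynomial (σ × ι) k') :
    Prop :=
  aeval (fun i => ∑ j, C (α j) * X (i, j)) f = ∑ j, C (α j) * map (algebraMap k' k) (c j)

theorem IsWeilDescent.eval_sum_smul {α : ι → k} {f : MvPolynomial σ k}
    {c : ι → MvPolynomial (σ × ι) k'} (hc : IsWeilDescent α f c) (a : σ × ι → k') :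
    eval (fun i => ∑ j, a (i, j) • α j) f = ∑ j, eval a (c j) • α j := by
  have h := congrArg (eval (algebraMap k' k ∘ a)) hc
  rw [aeval_eq_bind₁, eval, eval₂Hom_bind₁] at h
  simpa [eval_map, ← aeval_def, aeval_algebraMap_comp, Algebra.smul_def, mul_comm] using h

theorem IsWeilDescent.eval_eq_zero_iff {b : Module.Basis ι k' k} {f : MvPolynomial σ k}
    {c : ι → MvPolynomial (σ × ι) k'} (hc : IsWeilDescent b f c) (a : σ × ι → k') :
    eval (fun i => ∑ j, a (i, j) • b j) f = 0 ↔ ∀ j, eval a (c j) = 0 := by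
  rw [hc.eval_sum_smul, ← b.equivFun_symm_apply, LinearEquiv.map_eq_zero_iff]
  exact _root_.funext_iff

theorem IsWeilDescent.bijOn_zeros (b : Module.Basis ι k' k) (F : Set (MvPolynomial σ k))
    (c : MvPolynomial σ k → ι → MvPolynomial (σ × ι) k')
    (hc : ∀ f ∈ F, IsWeilDescent b f (c f)) :
    Set.BijOn (fun (a : σ × ι → k') (i : σ) => ∑ j, a (i, j) • b j)
      {a | ∀ p ∈ {p | ∃ f ∈ F, ∃ j, p = c f j}, eval a p = 0}
      {x | ∀ f ∈ F, eval x f = 0} := by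
  convert b.bijective_sum_smul_uncurry.bijOn_preimage using 1
  ext a
  refine ⟨fun h f hf => ((hc f hf).eval_eq_zero_iff a).mpr fun j => h _ ⟨f, hf, j, rfl⟩, ?_⟩
  rintro h _ ⟨f, hf, j, rfl⟩
  exact ((hc f hf).eval_eq_zero_iff a).mp (h f hf) j

end MvPolynomial

theorem weil_descent_solutions_general
    {k' k K : Type} [Field k'] [Fintype k'] [Field k] [Algebra k' k]
    [Field K] [Algebra k' K]
    (q n m : ℕ) (hq : q = Fintype.card k')
    (α : Module.Basis (Fin n) k' k)
    (F : Finset (MvPolynomial (Fin m) k))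
    (comp : MvPolynomial (Fin m) k → Fin n → MvPolynomial (Fin m × Fin n) k')
    (hcomp : ∀ f ∈ F,
      aeval (fun i : Fin m => ∑ j : Fin n, MvPolynomial.C (α j) * X (i, j)) f
        = ∑ j : Fin n,
            MvPolynomial.C (α j) * MvPolynomial.map (algebraMap k' k) (comp f j))
    (F' F'1 : Set (MvPolynomial (Fin m × Fin n) k'))
    (hF' : F' = {p | ∃ f ∈ F, ∃ j : Fin n, p = comp f j})
    (hF'1 : F'1 = F' ∪ Set.range (fun p : Fin m × Fin n => X p ^ q - X p)) :
    ({x : Fin m × Fin n → K | ∀ f ∈ F'1, MvPolynomial.aeval x f = 0}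
        = (fun a : Fin m × Fin n → k' => (algebraMap k' K) ∘ a) ''
            {a : Fin m × Fin n → k' | ∀ f ∈ F', MvPolynomial.eval a f = 0}) ∧
    Set.BijOn
      (fun (a : Fin m × Fin n → k') (i : Fin m) => ∑ j : Fin n, a (i, j) • α j)
      {a : Fin m × Fin n → k' | ∀ f ∈ F', MvPolynomial.eval a f = 0}
      {x : Fin m → k | ∀ f ∈ F, MvPolynomial.eval x f = 0} := by
  subst hq hF'1 hF'
  exact ⟨setOf_aeval_union_fieldEquations_eq_image _,
    IsWeilDescent.bijOn_zeros α F comp hcomp⟩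

/-- For the Weil descent system `F'` of `F` with respect to a basis `α` of `k/k'`:
(1) `Z_{k'}(F') = Z(F'₁)`, i.e. the solutions of `F'₁` over an algebraic closure `K` of
`k'` are exactly the (images of the) solutions of `F'` with all coordinates in `k'`; and
(2) `(a_{ij}) ↦ (∑_j a_{0j} α_j, …, ∑_j a_{m-1,j} α_j)` is a bijection from `Z_{k'}(F')`
onto `Z_k(F)`. -/
theorem weil_descent_solutions
    {k' k K : Type} [Field k'] [Fintype k'] [Field k] [Algebra k' k]
    [Field K] [Algebra k' K] [IsAlgClosed K]
    (q n m : ℕ) (hq : q = Fintype.card k')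
    (α : Module.Basis (Fin n) k' k)
    (F : Finset (MvPolynomial (Fin m) k))
    (comp : MvPolynomial (Fin m) k → Fin n → MvPolynomial (Fin m × Fin n) k')
    (hcomp : ∀ f ∈ F,
      aeval (fun i : Fin m => ∑ j : Fin n, MvPolynomial.C (α j) * X (i, j)) f
        = ∑ j : Fin n,
            MvPolynomial.C (α j) * MvPolynomial.map (algebraMap k' k) (comp f j))
    (F' F'1 : Set (MvPolynomial (Fin m × Fin n) k'))
    (hF' : F' = {p | ∃ f ∈ F, ∃ j : Fin n, p = comp f j})
    (hF'1 : F'1 = F' ∪ Set.range (fun p : Fin m × Fin n => X p ^ q - X p)) :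
    ({x : Fin m × Fin n → K | ∀ f ∈ F'1, MvPolynomial.aeval x f = 0}
        = (fun a : Fin m × Fin n → k' => (algebraMap k' K) ∘ a) ''
            {a : Fin m × Fin n → k' | ∀ f ∈ F', MvPolynomial.eval a f = 0}) ∧
    Set.BijOn
      (fun (a : Fin m × Fin n → k') (i : Fin m) => ∑ j : Fin n, a (i, j) • α j)
      {a : Fin m × Fin n → k' | ∀ f ∈ F', MvPolynomial.eval a f = 0}
      {x : Fin m → k | ∀ f ∈ F, MvPolynomial.eval x f = 0} :=
  weil_descent_solutions_general q n m hq α F comp hcomp F' F'1 hF' hF'1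
end

section
/- The ideal generated by F_1 in k[X_i, Y_{ij} : 0 ≤ i ≤ m−1, 1 ≤ j ≤ n−1] is a radical ideal. -/
/-!
Modulo the ideal, the cyclic relations give `X_{ij} ^ q ^ n = X_{ij}`, and every constant of
`k = 𝔽_{q^n}` satisfies `a ^ q ^ n = a`. Since `f ↦ f ^ q ^ n` is a ring endomorphism in
characteristic `p`, every element `f` of the quotient satisfies `f ^ q ^ n = f`, so the quotient
has no nonzero nilpotents.
-/

open MvPolynomial

theorem Ideal.isRadical_of_forall_mk_pow_eq {R : Type*} [CommRing R] {I : Ideal R} {N : ℕ}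
    (hN : 1 < N) (h : ∀ r, Ideal.Quotient.mk I r ^ N = Ideal.Quotient.mk I r) : I.IsRadical :=
  (isRadical_iff_pow_one_lt N hN).2 fun r hr => by
    rwa [← Ideal.Quotient.eq_zero_iff_mem, ← h, ← map_pow, Ideal.Quotient.eq_zero_iff_mem]

open Fin.NatCast in
theorem Fin.pow_pow_eq_add_of_pow_eq_succ {M : Type*} [Monoid M] {n q : ℕ} [NeZero n]
    {y : Fin n → M} (h : ∀ j, y j ^ q = y (j + 1)) (j : Fin n) (k : ℕ) :
    y j ^ q ^ k = y (j + (k : Fin n)) := by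
  induction k with
  | zero => simp
  | succ k ih => rw [pow_succ, pow_mul, ih, h, Nat.cast_succ, add_assoc]

theorem Fin.pow_pow_eq_self_of_pow_eq_succ {M : Type*} [Monoid M] {n q : ℕ} [NeZero n]
    {y : Fin n → M} (h : ∀ j, y j ^ q = y (j + 1)) (j : Fin n) : y j ^ q ^ n = y j := by
  rw [Fin.pow_pow_eq_add_of_pow_eq_succ h, Fin.natCast_self, add_zero]

theorem MvPolynomial.map_pow_expChar_pow_eq {σ R S : Type*} [CommSemiring R] [CommSemiring S]
    {p : ℕ} [ExpChar R p] {e : ℕ} (hR : ∀ a : R, a ^ p ^ e = a) (φ : MvPolynomial σ R →+* S)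
    (hX : ∀ i, φ (X i) ^ p ^ e = φ (X i)) (f : MvPolynomial σ R) : φ f ^ p ^ e = φ f := by
  have : φ.comp (iterateFrobenius _ p e) = φ :=
    ringHom_ext (fun a => by simp [iterateFrobenius_def, ← map_pow, hR])
      (by simpa [iterateFrobenius_def])
  simpa [iterateFrobenius_def] using congr($this f)

/-- The ideal generated by
`F₁ = F ∪ {X_i^q - Y_{i1}, Y_{i1}^q - Y_{i2}, …, Y_{i,n-1}^q - X_i}` in
`k[X_i, Y_{ij}]` is a radical ideal, where `k = F_{q^n}`.  (The variables are indexed by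
`Fin m × Fin n`, with `X_i = (i,0)`, `Y_{ij} = (i,j)`, and the cyclic relations
`Z_{ij}^q - Z_{i,j+1 mod n}`.) -/
theorem ideal_span_F1_isRadical
    {k' k : Type} [Field k'] [Fintype k'] [Field k] [Algebra k' k]
    (q n m : ℕ) (hq : q = Fintype.card k') (hn : 0 < n)
    (α : Module.Basis (Fin n) k' k)
    (F : Finset (MvPolynomial (Fin m) k))
    (F1 : Set (MvPolynomial (Fin m × Fin n) k))
    (hF1 : F1 =
      (MvPolynomial.rename fun i : Fin m => (i, (⟨0, hn⟩ : Fin n))) '' ↑F ∪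
      Set.range (fun p : Fin m × Fin n =>
        X p ^ q - X (p.1, p.2 + ⟨1 % n, Nat.mod_lt 1 hn⟩))) :
    (Ideal.span F1).IsRadical := by
  have : NeZero n := ⟨hn.ne'⟩
  have : Fintype k := Module.fintypeOfFintype α
  obtain ⟨e, hp, hcard⟩ := FiniteField.card k' (ringChar k')
  have : Fact (ringChar k').Prime := ⟨hp⟩
  have : CharP k (ringChar k') := charP_of_injective_algebraMap (algebraMap k' k).injective _
  have hQ : q ^ n = ringChar k' ^ ((e : ℕ) * n) := by rw [hq, hcard, pow_mul]
  have hk (a : k) : a ^ q ^ n = a := by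
    rw [hq, ← Fintype.card_fin n, ← Module.card_fintype α]; exact FiniteField.pow_card a
  let π := Ideal.Quotient.mk (Ideal.span F1)
  have hcycle (i : Fin m) (j : Fin n) : π (X (i, j)) ^ q = π (X (i, j + 1)) := by
    have hone : (⟨1 % n, Nat.mod_lt 1 hn⟩ : Fin n) = 1 := Fin.ext (Fin.val_one' n).symm
    rw [← map_pow, Ideal.Quotient.eq]
    exact Ideal.subset_span (hF1 ▸ Or.inr ⟨(i, j), by rw [hone]⟩)
  refine Ideal.isRadical_of_forall_mk_pow_eq (Nat.one_lt_pow hn.ne' (hq ▸ Fintype.one_lt_card)) ?_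
  rw [hQ] at hk ⊢
  exact MvPolynomial.map_pow_expChar_pow_eq hk π fun ⟨i, j⟩ =>
    hQ ▸ Fin.pow_pow_eq_self_of_pow_eq_succ (hcycle i) j
end

section
/- Let Q = {x_i^{q^{n'}} − L(g_W(x_i)) : 0 ≤ i ≤ m−1} ⊆ R = k[x_0,…,x_{m−1}]. The k-algebra homomorphism R → S/⟨Q̄⟩ determined by x_i ↦ x_{i0} (mod ⟨Q̄⟩) induces a k-algebra isomorphism R/⟨Q⟩ ≅ S/⟨Q̄⟩ under which, for 0 ≤ j ≤ n'−1, the class of x_i^{q^j} corresponds to the class of x_{ij}. -/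
open MvPolynomial

noncomputable section

/-!
The relations `Q̄` say exactly that `x_{i,j+1} = x_{ij}^q` and `x_{i,n'-1}^q = ℓ(g_W(x_i))`.
The first family lets one eliminate every `x_{ij}` with `j > 0` in favour of `x_{i0}^{q^j}`,
and under this substitution the second family becomes `x_{i0}^{q^{n'}} = L(g_W(x_{i0}))`,
which is `Q`. Hence `x_i ↦ x_{i0}` and `x_{ij} ↦ x_i^{q^j}` are mutually inverse on the
quotients.
-/

namespace QbarQuotient

variable {k : Type*} [Field k] {m n' : ℕ} (q : ℕ) (g : Polynomial k)

/-- The set `Q = {x_i^{q^{n'}} - L(g(x_i))}` in `R = k[x_0, …, x_{m-1}]`. -/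
def linearizedRelations (m n' : ℕ) : Set (MvPolynomial (Fin m) k) :=
  Set.range fun i : Fin m => X i ^ q ^ n' - ∑ j : Fin n', C (g.coeff j) * X i ^ q ^ (j : ℕ)

local notation "Q" => Ideal.span (linearizedRelations q g m n')
local notation "Qbar" => Ideal.span (QbarFrom m n' q 0 g)

theorem mk_X_eq_mk_X_zero_pow (hn' : 0 < n') (i : Fin m) :
    ∀ (j : ℕ) (hj : j < n'),
      Ideal.Quotient.mk Qbar (X (i, ⟨j, hj⟩)) =
        Ideal.Quotient.mk Qbar (X (i, ⟨0, hn'⟩)) ^ q ^ j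
  | 0, _ => by simp
  | j + 1, hj => by
    have hrel : X (i, ⟨j, j.lt_of_succ_lt hj⟩) ^ q - X (i, ⟨j + 1, hj⟩) ∈ Qbar :=
      Ideal.subset_span (Or.inl ⟨i, ⟨j, j.lt_of_succ_lt hj⟩, hj, (i : ℕ).zero_le, rfl⟩)
    rw [← Ideal.Quotient.eq.mpr hrel, map_pow, mk_X_eq_mk_X_zero_pow hn' i j, ← pow_mul,
      ← pow_succ]

theorem mk_X_zero_pow_pow_eq_mk_ellAt (hn' : 0 < n') (i : Fin m) :
    Ideal.Quotient.mk Qbar (X (i, ⟨0, hn'⟩)) ^ q ^ n' =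
      Ideal.Quotient.mk Qbar (ellAt m n' i g) := by
  cases n' with
  | zero => omega
  | succ n =>
    have hrel : X (i, Fin.last n) ^ q - ellAt m (n + 1) i g ∈
        Ideal.span (QbarFrom m (n + 1) q 0 g) :=
      Ideal.subset_span (Or.inr ⟨i, Fin.last n, (i : ℕ).zero_le, rfl, rfl⟩)
    rw [← Ideal.Quotient.eq.mpr hrel, pow_succ, pow_mul, map_pow,
      ← mk_X_eq_mk_X_zero_pow q g hn' i n n.lt_succ_self, Fin.last]

def toQuotientQbar (hn' : 0 < n') :
    (MvPolynomial (Fin m) k ⧸ Q) →ₐ[k] MvPolynomial (Fin m × Fin n') k ⧸ Qbar :=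
  Ideal.Quotient.liftₐ Q (aeval fun i => Ideal.Quotient.mk Qbar (X (i, ⟨0, hn'⟩))) <| by
    suffices Q ≤ RingHom.ker (aeval fun i => Ideal.Quotient.mk Qbar (X (i, ⟨0, hn'⟩))) from
      fun a ha => RingHom.mem_ker.mp (this ha)
    refine Ideal.span_le.mpr ?_
    rintro _ ⟨i, rfl⟩
    simp only [SetLike.mem_coe, RingHom.mem_ker, map_sub, map_pow, map_sum, map_mul, aeval_X,
      aeval_C, mk_X_zero_pow_pow_eq_mk_ellAt q g hn', ellAt, sub_eq_zero]
    refine Finset.sum_congr rfl fun j _ => ?_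
    rw [← mk_X_eq_mk_X_zero_pow q g hn' i j j.2, Fin.eta, ← algebraMap_eq,
      Ideal.Quotient.mk_algebraMap]

def ofQuotientQbar :
    (MvPolynomial (Fin m × Fin n') k ⧸ Qbar) →ₐ[k] MvPolynomial (Fin m) k ⧸ Q :=
  Ideal.Quotient.liftₐ Qbar (aeval fun p => Ideal.Quotient.mk Q (X p.1 ^ q ^ (p.2 : ℕ))) <| by
    suffices
        Qbar ≤ RingHom.ker (aeval fun p => Ideal.Quotient.mk Q (X p.1 ^ q ^ (p.2 : ℕ))) from
      fun a ha => RingHom.mem_ker.mp (this ha)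
    refine Ideal.span_le.mpr ?_
    rintro _ (⟨i, j, hj, -, rfl⟩ | ⟨i, j, -, hj, rfl⟩)
    · simp only [SetLike.mem_coe, RingHom.mem_ker, map_sub, map_pow, aeval_X, ← pow_mul,
        ← pow_succ, sub_self]
    · have hrel : X i ^ q ^ n' - ∑ j : Fin n', C (g.coeff j) * X i ^ q ^ (j : ℕ) ∈ Q :=
        Ideal.subset_span ⟨i, rfl⟩
      have hzero := Ideal.Quotient.eq_zero_iff_mem.mpr hrel
      simp only [map_sub, map_pow, map_sum, map_mul, ← algebraMap_eq,
        Ideal.Quotient.mk_algebraMap] at hzero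
      simpa only [SetLike.mem_coe, RingHom.mem_ker, ellAt, map_sub, map_pow, map_sum, map_mul,
        aeval_X, aeval_C, ← pow_mul, ← pow_succ, hj] using hzero

theorem toQuotientQbar_mk (hn' : 0 < n') (f : MvPolynomial (Fin m) k) :
    toQuotientQbar q g hn' (Ideal.Quotient.mk Q f) =
      Ideal.Quotient.mk Qbar (aeval (fun i : Fin m => X (i, (⟨0, hn'⟩ : Fin n'))) f) := by
  change aeval (fun i => Ideal.Quotient.mk Qbar (X (i, ⟨0, hn'⟩))) f = _
  rw [← Ideal.Quotient.mkₐ_eq_mk k, ← AlgHom.comp_apply, comp_aeval]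

theorem toQuotientQbar_mk_X_pow (hn' : 0 < n') (i : Fin m) (j : Fin n') :
    toQuotientQbar q g hn' (Ideal.Quotient.mk Q (X i ^ q ^ (j : ℕ))) =
      Ideal.Quotient.mk Qbar (X (i, j)) := by
  rw [toQuotientQbar_mk, map_pow, aeval_X, map_pow, ← mk_X_eq_mk_X_zero_pow q g hn' i j j.2]

theorem ofQuotientQbar_mk_X (p : Fin m × Fin n') :
    ofQuotientQbar q g (Ideal.Quotient.mk Qbar (X p)) =
      Ideal.Quotient.mk Q (X p.1 ^ q ^ (p.2 : ℕ)) :=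
  aeval_X _ p

def quotientEquiv (hn' : 0 < n') :
    (MvPolynomial (Fin m) k ⧸ Q) ≃ₐ[k] MvPolynomial (Fin m × Fin n') k ⧸ Qbar :=
  AlgEquiv.ofAlgHom (toQuotientQbar q g hn') (ofQuotientQbar q g)
    (Ideal.Quotient.algHom_ext k <| algHom_ext fun p => by
      simp only [AlgHom.comp_apply, Ideal.Quotient.mkₐ_eq_mk, ofQuotientQbar_mk_X,
        toQuotientQbar_mk_X_pow, AlgHom.id_apply])
    (Ideal.Quotient.algHom_ext k <| algHom_ext fun i => by
      have h := toQuotientQbar_mk_X_pow q g hn' i ⟨0, hn'⟩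
      simp only [pow_zero, pow_one] at h
      simp only [AlgHom.comp_apply, Ideal.Quotient.mkₐ_eq_mk, h, ofQuotientQbar_mk_X,
        AlgHom.id_apply, pow_zero, pow_one])

end QbarQuotient

theorem quotient_iso_Q_Qbar_general
    {k' k : Type} [Field k'] [Field k] [Algebra k' k]
    (q m : ℕ)
    (n' : ℕ) (hn'pos : 0 < n')
    (gW : Polynomial k')
    (Q : Set (MvPolynomial (Fin m) k))
    (hQ : Q = Set.range fun i : Fin m =>
      X i ^ q ^ n' -
        ∑ j : Fin n', MvPolynomial.C (algebraMap k' k (gW.coeff (j : ℕ))) *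
          X i ^ q ^ (j : ℕ)) :
    ∃ e : (MvPolynomial (Fin m) k ⧸ Ideal.span Q) ≃ₐ[k]
        (MvPolynomial (Fin m × Fin n') k ⧸
          Ideal.span (QbarFrom m n' q 0 (gW.map (algebraMap k' k)))),
      (∀ f : MvPolynomial (Fin m) k,
        e (Ideal.Quotient.mk (Ideal.span Q) f) =
          Ideal.Quotient.mk _
            (aeval (fun i : Fin m => X (i, (⟨0, hn'pos⟩ : Fin n'))) f)) ∧
      ∀ (i : Fin m) (j : Fin n'),
        e (Ideal.Quotient.mk (Ideal.span Q) (X i ^ q ^ (j : ℕ))) =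
          Ideal.Quotient.mk _ (X (i, j)) := by
  have hQ' : Q = QbarQuotient.linearizedRelations q (gW.map (algebraMap k' k)) m n' := by
    simp only [hQ, QbarQuotient.linearizedRelations, Polynomial.coeff_map]
  subst hQ'
  exact ⟨QbarQuotient.quotientEquiv q _ hn'pos, QbarQuotient.toQuotientQbar_mk q _ hn'pos,
    QbarQuotient.toQuotientQbar_mk_X_pow q _ hn'pos⟩

/-- With `Q = {x_i^{q^{n'}} - L(g_W(x_i))} ⊆ R = k[x_0,…,x_{m-1}]`, the `k`-algebra
homomorphism `R → S/⟨Q̄⟩` sending `x_i ↦ x_{i0}` induces a `k`-algebra isomorphism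
`R/⟨Q⟩ ≅ S/⟨Q̄⟩` under which the class of `x_i^{q^j}` corresponds to the class of
`x_{ij}` for `0 ≤ j ≤ n'-1`. -/
theorem quotient_iso_Q_Qbar
    {k' k : Type} [Field k'] [Fintype k'] [Field k] [Algebra k' k]
    (q n m : ℕ) (hq : q = Fintype.card k') (hn : 0 < n)
    (α : Module.Basis (Fin n) k' k)
    (fW : Polynomial k') (hmonic : fW.Monic) (hdvd : fW ∣ Polynomial.X ^ n - 1)
    (n' : ℕ) (hn' : n' = fW.natDegree) (hn'pos : 0 < n')
    (gW : Polynomial k') (hgW : gW = Polynomial.X ^ n' - fW)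
    (Q : Set (MvPolynomial (Fin m) k))
    (hQ : Q = Set.range fun i : Fin m =>
      X i ^ q ^ n' -
        ∑ j : Fin n', MvPolynomial.C (algebraMap k' k (gW.coeff (j : ℕ))) *
          X i ^ q ^ (j : ℕ)) :
    ∃ e : (MvPolynomial (Fin m) k ⧸ Ideal.span Q) ≃ₐ[k]
        (MvPolynomial (Fin m × Fin n') k ⧸
          Ideal.span (QbarFrom m n' q 0 (gW.map (algebraMap k' k)))),
      (∀ f : MvPolynomial (Fin m) k,
        e (Ideal.Quotient.mk (Ideal.span Q) f) =
          Ideal.Quotient.mk _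
            (aeval (fun i : Fin m => X (i, (⟨0, hn'pos⟩ : Fin n'))) f)) ∧
      ∀ (i : Fin m) (j : Fin n'),
        e (Ideal.Quotient.mk (Ideal.span Q) (X i ^ q ^ (j : ℕ))) =
          Ideal.Quotient.mk _ (X (i, j)) :=
  quotient_iso_Q_Qbar_general q m n' hn'pos gW Q hQ

end
end

section
/- The elements of S_1 are pairwise distinct modulo the ideal ⟨Q̄⟩; equivalently, S_1 ∩ ⟨Q̄⟩ = {0}, i.e., no nonzero k-linear form in the variables x_{ij} lies in the ideal generated by Q̄. -/
open MvPolynomial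

noncomputable section

/-!
Let `τ` be the `q`-Frobenius of `k` over `k'` and `W = ker f_W(τ)`. Write `f_W * u = X ^ n - 1`.
As `τ ^ n = 1`, the image of `u(τ)` lies in `W`, while `ker u(τ)` consists of roots of a
`q`-polynomial of degree `q ^ deg u`; hence `q ^ n ≤ |W| * q ^ (n - n')`, i.e. `|W| ≥ q ^ n'`.
For `a : Fin m → W` the point `x_{ij} = a_i ^ q ^ j` is a common zero of `Q̄`, so a linear form
`∑ c_{ij} x_{ij}` in `⟨Q̄⟩` gives `∑_j c_{ij} b ^ q ^ j = 0` for every `b ∈ W`. This `q`-polynomial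
has degree at most `q ^ (n' - 1) < |W|`, so all `c_{ij}` vanish.
-/

theorem FiniteField.frobeniusAlgHom_toLinearMap_pow_apply {K L : Type*} [Field K] [Fintype K]
    [CommRing L] [Algebra K L] (j : ℕ) (a : L) :
    ((frobeniusAlgHom K L).toLinearMap ^ j) a = a ^ Fintype.card K ^ j := by
  rw [Module.End.pow_apply, AlgHom.coe_toLinearMap, coe_frobeniusAlgHom, pow_iterate]

namespace Polynomial

section Linearized

variable {K : Type*} [Field K] {q N : ℕ}

def linearizedPoly (q : ℕ) (c : Fin N → K) : K[X] :=
  ∑ j, C (c j) * X ^ q ^ (j : ℕ)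

theorem natDegree_linearizedPoly_le (hq : 1 ≤ q) (c : Fin N → K) :
    (linearizedPoly q c).natDegree ≤ q ^ (N - 1) :=
  natDegree_sum_le_of_forall_le _ _ fun j _ =>
    (natDegree_C_mul_X_pow_le _ _).trans (Nat.pow_le_pow_right hq (by omega))

theorem coeff_linearizedPoly (hq : 2 ≤ q) (c : Fin N → K) (j : Fin N) :
    (linearizedPoly q c).coeff (q ^ (j : ℕ)) = c j := by
  rw [linearizedPoly, finsetSum_coeff, Finset.sum_eq_single j]
  · simp
  · intro i _ hij
    rw [coeff_C_mul_X_pow, if_neg]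
    exact fun h => hij (Fin.ext (Nat.pow_right_injective hq h.symm))
  · simp

theorem eval_linearizedPoly (c : Fin N → K) (a : K) :
    (linearizedPoly q c).eval a = ∑ j, c j * a ^ q ^ (j : ℕ) := by
  simp [linearizedPoly, eval_finsetSum]

theorem card_le_of_forall_linearized_eq_zero (hq : 2 ≤ q) {c : Fin N → K} (hc : c ≠ 0)
    {V : Set K} (hV : ∀ a ∈ V, ∑ j, c j * a ^ q ^ (j : ℕ) = 0) :
    Nat.card V ≤ q ^ (N - 1) := by
  have hP : linearizedPoly q c ≠ 0 := fun hP => hc <| by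
    ext j
    rw [← coeff_linearizedPoly hq c j, hP, coeff_zero, Pi.zero_apply]
  have hVroots : V ⊆ (linearizedPoly q c).rootSet K := fun a ha => by
    rw [mem_rootSet, coe_aeval_eq_eval, eval_linearizedPoly]
    exact ⟨hP, hV a ha⟩
  calc Nat.card V ≤ ((linearizedPoly q c).rootSet K).ncard :=
        Nat.card_mono (rootSet_finite _ _) hVroots
    _ ≤ (linearizedPoly q c).natDegree := ncard_rootSet_le _ _
    _ ≤ q ^ (N - 1) := natDegree_linearizedPoly_le (by omega) c

end Linearized

section Frobenius

open FiniteField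

variable {K L : Type*} [Field K] [Fintype K] [Field L] [Algebra K L]

local notation "q" => Fintype.card K
local notation "τ" => AlgHom.toLinearMap (frobeniusAlgHom K L)

theorem aeval_frobenius_apply {u : K[X]} {N : ℕ} (hu : u.degree < N) (a : L) :
    aeval τ u a = ∑ j : Fin N, algebraMap K L (u.coeff j) * a ^ q ^ (j : ℕ) := by
  rcases eq_or_ne u 0 with rfl | hu0
  · simp
  rw [aeval_eq_sum_range' ((natDegree_lt_iff_degree_lt hu0).mpr hu), LinearMap.sum_apply,
    ← Fin.sum_univ_eq_sum_range]
  simp [frobeniusAlgHom_toLinearMap_pow_apply, Algebra.smul_def]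

theorem mem_ker_aeval_frobenius_X_pow_sub_iff {g : K[X]} {N : ℕ} (hg : g.degree < N) (a : L) :
    a ∈ LinearMap.ker (aeval τ (X ^ N - g)) ↔
      a ^ q ^ N = ∑ j : Fin N, algebraMap K L (g.coeff j) * a ^ q ^ (j : ℕ) := by
  rw [LinearMap.mem_ker, map_sub, LinearMap.sub_apply, sub_eq_zero, aeval_frobenius_apply hg,
    map_pow, aeval_X, frobeniusAlgHom_toLinearMap_pow_apply]

theorem card_ker_aeval_frobenius_le {u : K[X]} (hu : u ≠ 0) :
    Nat.card (LinearMap.ker (aeval τ u)) ≤ q ^ u.natDegree := by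
  have hc : (fun j : Fin (u.natDegree + 1) => algebraMap K L (u.coeff j)) ≠ 0 := fun hc => by
    simpa [hu] using congr_fun hc (Fin.last _)
  rw [← Nat.add_sub_cancel u.natDegree 1]
  refine card_le_of_forall_linearized_eq_zero Fintype.one_lt_card hc fun a ha => ?_
  rw [← aeval_frobenius_apply ((natDegree_lt_iff_degree_lt hu).mp (Nat.lt_succ_self _))]
  exact ha

theorem card_pow_le_card_ker_aeval_frobenius [Finite L] {f g : K[X]}
    (hfg : f * g = X ^ Module.finrank K L - 1) :
    q ^ f.natDegree ≤ Nat.card (LinearMap.ker (aeval τ f)) := by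
  have hfg0 : f * g ≠ 0 := by
    rw [hfg, ← C_1]
    exact X_pow_sub_C_ne_zero Module.finrank_pos 1
  have hg : g ≠ 0 := right_ne_zero_of_mul hfg0
  have hrange : LinearMap.range (aeval τ g) ≤ LinearMap.ker (aeval τ f) := by
    rw [LinearMap.range_le_ker_iff, ← Module.End.mul_eq_comp, ← map_mul, hfg,
      ← minpoly_frobeniusAlgHom, minpoly.aeval]
  have hdeg : f.natDegree + g.natDegree = Module.finrank K L := by
    rw [← natDegree_mul (left_ne_zero_of_mul hfg0) hg, hfg, ← C_1, natDegree_X_pow_sub_C]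
  have hcard : q ^ f.natDegree * q ^ g.natDegree ≤
      Nat.card (LinearMap.ker (aeval τ f)) * q ^ g.natDegree :=
    calc q ^ f.natDegree * q ^ g.natDegree = Nat.card L := by
          rw [← pow_add, hdeg, Module.natCard_eq_pow_finrank (K := K), Nat.card_eq_fintype_card]
      _ = Nat.card (LinearMap.range (aeval τ g)) * Nat.card (LinearMap.ker (aeval τ g)) := by
          rw [(LinearMap.ker (aeval τ g)).card_eq_card_quotient_mul_card, mul_comm,
            Nat.card_congr (LinearMap.quotKerEquivRange _).toEquiv]
      _ ≤ Nat.card (LinearMap.ker (aeval τ f)) * q ^ g.natDegree :=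
          Nat.mul_le_mul (Nat.card_mono (Set.toFinite _) hrange) (card_ker_aeval_frobenius_le hg)
  exact Nat.le_of_mul_le_mul_right hcard (by positivity)

end Frobenius

end Polynomial

section QbarZeros

variable {k : Type*} [Field k] {m n' : ℕ}

theorem S1r_zero : S1r m n' 0 = Submodule.span k (Set.range (X (R := k))) := by
  simp [S1r, Set.range, eq_comm]

theorem aeval_ellAt (x : Fin m × Fin n' → k) (i : Fin m) (h : Polynomial k) :
    aeval x (ellAt m n' i h) = ∑ j : Fin n', h.coeff j * x (i, j) := by
  simp [ellAt]

theorem aeval_eq_zero_of_mem_QbarFrom {q r : ℕ} {g : Polynomial k} (a : Fin m → k)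
    (ha : ∀ i, a i ^ q ^ n' = ∑ j : Fin n', g.coeff j * a i ^ q ^ (j : ℕ)) :
    ∀ P ∈ QbarFrom m n' q r g, aeval (fun p => a p.1 ^ q ^ (p.2 : ℕ)) P = 0 := by
  rintro P (⟨i, j, hj, -, rfl⟩ | ⟨i, j, -, hjn, rfl⟩)
  · simp [← pow_mul, ← pow_succ]
  · rw [map_sub, aeval_ellAt, map_pow, aeval_X, ← pow_mul, ← pow_succ, hjn, ha, sub_self]

theorem aeval_eq_zero_of_mem_span_QbarFrom {q r : ℕ} {g : Polynomial k} (a : Fin m → k)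
    (ha : ∀ i, a i ^ q ^ n' = ∑ j : Fin n', g.coeff j * a i ^ q ^ (j : ℕ))
    {P : MvPolynomial (Fin m × Fin n') k} (hP : P ∈ Ideal.span (QbarFrom m n' q r g)) :
    aeval (fun p => a p.1 ^ q ^ (p.2 : ℕ)) P = 0 :=
  (Ideal.span_le (I := RingHom.ker _)).mpr (aeval_eq_zero_of_mem_QbarFrom a ha) hP

theorem eq_zero_of_forall_sum_mul_pow_eq_zero {q : ℕ} (hq : 2 ≤ q) {V : Set k} (h0 : 0 ∈ V)
    (hV : q ^ n' ≤ Nat.card V) {c : Fin m × Fin n' → k}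
    (hc : ∀ a : Fin m → k, (∀ i, a i ∈ V) → ∑ p, c p * a p.1 ^ q ^ (p.2 : ℕ) = 0) :
    c = 0 := by
  ext ⟨i, j⟩
  by_contra hne
  have hrow : (fun j => c (i, j)) ≠ 0 := fun h => hne (congr_fun h j)
  have hcard := Polynomial.card_le_of_forall_linearized_eq_zero hq hrow (V := V) fun b hb => by
    have hsingle := hc (Pi.single i b) fun i' => by
      rcases eq_or_ne i' i with rfl | h
      · simpa using hb
      · simpa [h] using h0
    rw [Fintype.sum_prod_type, Finset.sum_eq_single i] at hsingle
    · simpa using hsingle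
    · intro i' _ h
      simp [h, zero_pow (pow_ne_zero _ (by omega : q ≠ 0))]
    · simp
  have : q ^ (n' - 1) < q ^ n' := Nat.pow_lt_pow_right hq (by have := j.isLt; omega)
  omega

end QbarZeros

theorem linear_forms_distinct_mod_Qbar_general
    {k' k : Type} [Field k'] [Fintype k'] [Field k] [Algebra k' k]
    (q n m : ℕ) (hq : q = Fintype.card k')
    (α : Module.Basis (Fin n) k' k)
    (fW : Polynomial k') (hmonic : fW.Monic) (hdvd : fW ∣ Polynomial.X ^ n - 1)
    (n' : ℕ) (hn' : n' = fW.natDegree)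
    (gW : Polynomial k') (hgW : gW = Polynomial.X ^ n' - fW) :
    ∀ f g : MvPolynomial (Fin m × Fin n') k,
      f ∈ S1r m n' 0 → g ∈ S1r m n' 0 →
      f - g ∈ Ideal.span (QbarFrom m n' q 0 (gW.map (algebraMap k' k))) →
      f = g := by
  intro f g hf hg hfg
  obtain ⟨u, hu⟩ := hdvd
  have : Module.Finite k' k := .of_basis α
  have : Finite k := Module.finite_of_finite k'
  set W := LinearMap.ker (Polynomial.aeval (FiniteField.frobeniusAlgHom k' k).toLinearMap fW)
  have hWcard : q ^ n' ≤ Nat.card W := by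
    rw [hq, hn']
    exact Polynomial.card_pow_le_card_ker_aeval_frobenius
      (by rw [← hu, Module.finrank_eq_card_basis α, Fintype.card_fin])
  have hgWdeg : gW.degree < n' := by
    rw [hgW, hn', ← Polynomial.degree_eq_natDegree hmonic.ne_zero]
    refine Polynomial.degree_sub_lt_right ?_ hmonic.ne_zero
      ((Polynomial.monic_X_pow _).trans hmonic.symm)
    rw [Polynomial.degree_X_pow, Polynomial.degree_eq_natDegree hmonic.ne_zero]
  have hW : ∀ a ∈ W,
      a ^ q ^ n' = ∑ j : Fin n', (gW.map (algebraMap k' k)).coeff j * a ^ q ^ (j : ℕ) := by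
    intro a ha
    have hfW : fW = Polynomial.X ^ n' - gW := by rw [hgW, sub_sub_cancel]
    simpa [Polynomial.coeff_map, hq] using
      (Polynomial.mem_ker_aeval_frobenius_X_pow_sub_iff hgWdeg a).mp (hfW ▸ ha)
  obtain ⟨c, hc⟩ := (Submodule.mem_span_range_iff_exists_fun k).mp
    (S1r_zero (k := k) ▸ sub_mem hf hg)
  rw [← hc] at hfg
  have hc0 : c = 0 := eq_zero_of_forall_sum_mul_pow_eq_zero (hq ▸ Fintype.one_lt_card) W.zero_mem
    hWcard fun a ha => by
      simpa [map_sum] using aeval_eq_zero_of_mem_span_QbarFrom a (fun i => hW _ (ha i)) hfg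
  rw [← sub_eq_zero, ← hc, hc0]
  simp

/-- The elements of `S₁` are pairwise distinct modulo the ideal `⟨Q̄⟩`; equivalently,
no nonzero `k`-linear form in the variables `x_{ij}` lies in the ideal generated by `Q̄`. -/
theorem linear_forms_distinct_mod_Qbar
    {k' k : Type} [Field k'] [Fintype k'] [Field k] [Algebra k' k]
    (q n m : ℕ) (hq : q = Fintype.card k') (hn : 0 < n)
    (α : Module.Basis (Fin n) k' k)
    (fW : Polynomial k') (hmonic : fW.Monic) (hdvd : fW ∣ Polynomial.X ^ n - 1)
    (n' : ℕ) (hn' : n' = fW.natDegree) (hn'pos : 0 < n')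
    (gW : Polynomial k') (hgW : gW = Polynomial.X ^ n' - fW) :
    ∀ f g : MvPolynomial (Fin m × Fin n') k,
      f ∈ S1r m n' 0 → g ∈ S1r m n' 0 →
      f - g ∈ Ideal.span (QbarFrom m n' q 0 (gW.map (algebraMap k' k))) →
      f = g :=
  linear_forms_distinct_mod_Qbar_general q n m hq α fW hmonic hdvd n' hn' gW hgW
end
end
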